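/- The infinite two-color Tantrix rotation puzzle problem Inf-2-TRP is undecidable: there is no computable function d : ℕ → Bool such that for every e ∈ ℕ for which the e-th partial computable function is total and computes (under the fixed encodings) a function 𝒜 : ℤ² → Option T_2, d(e) = true holds if and only if the rotation puzzle 𝒜 has a solution. -/

import Mathlib

/-- The Tantrix colors used in the tile set. -/
inductive Color where
  | red
  | blue
deriving DecidableEq

/-- A tile is its clockwise color sequence: a word of length 6 over the colors,
edges indexed `0, …, 5` clockwise. -/
abbrev Tile := Fin 6 → Color

/-- Cyclic rotation of a tile by `k` steps: edge `i` of the rotated tile carries the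
color of edge `i + k` of the original sequence.  Two solutions are compared as the
assigned rotated color sequences. -/
def rotTile (k : Fin 6) (t : Tile) : Tile := fun i => t (i + k)

open Color in
/-- The tile set T2: the color sequences bbrrrr, rrbbbb, brrbrr, rbbrbb, rbrrrb, brbbbr, bbbbbb, rrrrrr. -/
def T2 : Set Tile :=
  { ![blue,blue,red,red,red,red],
    ![red,red,blue,blue,blue,blue],
    ![blue,red,red,blue,red,red],
    ![red,blue,blue,red,blue,blue],
    ![red,blue,red,red,red,blue],
    ![blue,red,blue,blue,blue,red],
    ![blue,blue,blue,blue,blue,blue],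
    ![red,red,red,red,red,red] }

/-- The six neighbor offsets of the hexagonal layout of `ℤ²`, listed clockwise
starting from straight up; edge `i` of a tile at `x` is the edge shared with the
neighboring point `x + dirs i`, and opposite directions differ by `3` (mod 6).
Two points are neighbors exactly if their difference is one of these offsets. -/
def dirs : Fin 6 → ℤ × ℤ := ![(0,1), (1,1), (1,0), (0,-1), (-1,-1), (-1,0)]

/-- An explicit numeric code for a color. -/
def Color.toNat : Color → ℕ
  | .red => 0
  | .blue => 1

/-- An explicit encoding of tiles into `ℕ`. -/
def encTile (t : Tile) : ℕ :=
  ∑ i : Fin 6, (t i).toNat * 3 ^ (i : ℕ)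


/-- Tiles belonging to the tile set `T2`. -/
abbrev SetTile := {t : Tile // t ∈ T2}

/-- An explicit encoding of `Option SetTile` into `ℕ`. -/
def encOptTile : Option SetTile → ℕ
  | none => 0
  | some t => encTile t.1 + 1

/-- `sol` is a solution of the (possibly infinite) rotation-puzzle instance
`A : ℤ × ℤ → Option SetTile`: it assigns to each occupied point a cyclic rotation
of the tile placed there, such that for every pair of neighboring occupied points
the two assigned sequences give the same color to their joint edge (edge `d` of
the tile at `x` is glued to edge `d + 3` of the tile at `x + dirs d`). -/
def InfSolution (A : ℤ × ℤ → Option SetTile) (sol : ℤ × ℤ → Option Tile) : Prop :=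
  (∀ x, (A x = none → sol x = none) ∧
    (∀ t : SetTile, A x = some t → ∃ k : Fin 6, sol x = some (rotTile k t.1))) ∧
  (∀ (x : ℤ × ℤ) (d : Fin 6) (s s' : Tile),
    sol x = some s → sol (x + dirs d) = some s' → s d = s' (d + 3))

/-!
Reduction from the halting problem. For a code `c`, put a blue monochrome tile at `(z, 0)` and a
red one at `(z, 1)` whenever `c` halts on `0` within `encode z` steps. A monochrome tile looks the
same in every rotation, so this instance is solvable iff it is empty, i.e. iff `c` diverges on `0`;
and it is computed by a total code depending primitive recursively on `c`. A decider for the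
puzzle would therefore decide the halting problem.
-/

open Nat.Partrec (Code)
open Nat.Partrec.Code Encodable Denumerable

/-- The single-color tile `cccccc`, which looks the same under every rotation. -/
def monoTile (c : Color) : SetTile :=
  ⟨fun _ => c, by cases c <;> simp [T2, funext_iff, Fin.forall_fin_succ]⟩

theorem not_infSolution_of_mono_clash {A : ℤ × ℤ → Option SetTile} {sol : ℤ × ℤ → Option Tile}
    {x : ℤ × ℤ} {d : Fin 6} {c c' : Color} (hcc' : c ≠ c') (hx : A x = some (monoTile c))
    (hy : A (x + dirs d) = some (monoTile c')) : ¬ InfSolution A sol := by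
  rintro ⟨hocc, hedge⟩
  obtain ⟨k, hk⟩ := (hocc x).2 _ hx
  obtain ⟨k', hk'⟩ := (hocc (x + dirs d)).2 _ hy
  exact hcc' (hedge x d _ _ hk hk')

theorem infSolution_none {A : ℤ × ℤ → Option SetTile} (hA : ∀ x, A x = none) :
    InfSolution A fun _ => none :=
  ⟨fun x => ⟨fun _ => rfl, fun t ht => by simp [hA x] at ht⟩, fun _ _ _ _ h => by simp at h⟩

/-- Above every `z` with `p z`, a blue tile at `(z, 0)` touches a red tile at `(z, 1)`;
all other points are empty. -/
def stripInstance (p : ℤ → Bool) (x : ℤ × ℤ) : Option SetTile :=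
  bif p x.1 then
    (if x.2 = 0 then some (monoTile .blue) else if x.2 = 1 then some (monoTile .red) else none)
  else none

theorem exists_infSolution_stripInstance_iff (p : ℤ → Bool) :
    (∃ sol, InfSolution (stripInstance p) sol) ↔ ∀ z, p z = false := by
  constructor
  · rintro ⟨sol, hsol⟩ z
    by_contra hz
    rw [Bool.not_eq_false] at hz
    refine not_infSolution_of_mono_clash (x := (z, 0)) (d := 0) (c := .blue) (c' := .red)
      nofun ?_ ?_ hsol <;> simp [stripInstance, dirs, hz]
  · intro hp
    exact ⟨_, infSolution_none fun x => by simp [stripInstance, hp]⟩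

theorem encOptTile_stripInstance (p : ℤ → Bool) (x : ℤ × ℤ) :
    encOptTile (stripInstance p x) =
      bif p x.1 then
        (if x.2 = 0 then encOptTile (some (monoTile .blue))
          else if x.2 = 1 then encOptTile (some (monoTile .red)) else 0)
      else 0 := by
  unfold stripInstance
  cases p x.1 <;> split_ifs <;> rfl

theorem Primrec₂.encOptTile_stripInstance {α : Type*} [Primcodable α] {p : α → ℤ → Bool}
    (hp : Primrec₂ p) : Primrec₂ fun a x => encOptTile (stripInstance (p a) x) := by
  have hy (k : ℤ) : PrimrecPred fun ax : α × (ℤ × ℤ) => ax.2.2 = k :=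
    Primrec.eq.comp (Primrec.snd.comp .snd) (.const k)
  simp only [Primrec₂, _root_.encOptTile_stripInstance]
  exact Primrec.cond (hp.comp .fst (Primrec.fst.comp .snd))
    (Primrec.ite (hy 0) (.const _) (Primrec.ite (hy 1) (.const _) (.const 0))) (.const 0)

def haltsWithin (c : Code) (z : ℤ) : Bool :=
  (evaln (encode z) c 0).isSome

theorem exists_haltsWithin_iff (c : Code) : (∃ z, haltsWithin c z = true) ↔ (c.eval 0).Dom := by
  rw [Part.dom_iff_mem]
  constructor
  · rintro ⟨z, hz⟩
    obtain ⟨v, hv⟩ := Option.isSome_iff_exists.mp hz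
    exact ⟨v, evaln_sound hv⟩
  · rintro ⟨v, hv⟩
    obtain ⟨k, hk⟩ := evaln_complete.mp hv
    refine ⟨ofNat ℤ k, Option.isSome_iff_exists.mpr ⟨v, ?_⟩⟩
    rwa [encode_ofNat]

theorem primrec₂_haltsWithin : Primrec₂ fun (n : ℕ) (z : ℤ) => haltsWithin (ofNat Code n) z :=
  Primrec.option_isSome.comp <| primrec_evaln.comp <|
    ((Primrec.encode.comp .snd).pair ((Primrec.ofNat _).comp .fst)).pair (.const 0)

def CodeComputes (e : ℕ) (A : ℤ × ℤ → Option SetTile) : Prop :=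
  (∀ m, ((ofNat Code e).eval m).Dom) ∧
    ∀ x, (ofNat Code e).eval (encode x) = Part.some (encOptTile (A x))

theorem exists_computable_codeComputes {f : ℕ → ℤ × ℤ → Option SetTile}
    (hf : Primrec₂ fun n x => encOptTile (f n x)) :
    ∃ g : ℕ → ℕ, Computable g ∧ ∀ n, CodeComputes (g n) (f n) := by
  let F (n m : ℕ) : ℕ := (decode (α := ℤ × ℤ) m).casesOn 0 fun x => encOptTile (f n x)
  have hF : Primrec₂ F :=
    (Primrec.option_casesOn (Primrec.decode.comp .snd) (.const 0)
      (hf.comp (Primrec.fst.comp .fst) .snd).to₂).to₂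
  have hFpair : Nat.Partrec fun m => Part.some (F m.unpair.1 m.unpair.2) :=
    Partrec.nat_iff.mp
      (hF.comp (Primrec.fst.comp .unpair) (Primrec.snd.comp .unpair)).to_comp.partrec
  obtain ⟨c, hc⟩ := exists_code.mp hFpair
  have heval (n m : ℕ) : (ofNat Code (encode (curry c n))).eval m = Part.some (F n m) := by
    simp [eval_curry, hc]
  refine ⟨fun n => encode (curry c n),
    (Primrec.encode.comp (primrec₂_curry.comp (.const c) .id)).to_comp, fun n => ⟨?_, ?_⟩⟩
  · intro m
    rw [heval]
    trivial
  · intro x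
    rw [heval, Part.some_inj]
    simp only [F, encodek]

theorem exists_infSolution_stripInstance_haltsWithin_iff (c : Code) :
    (∃ sol, InfSolution (stripInstance (haltsWithin c)) sol) ↔ ¬ (c.eval 0).Dom := by
  simp [exists_infSolution_stripInstance_iff, ← exists_haltsWithin_iff]

/-- the infinite two-color Tantrix rotation puzzle problem
`Inf-2-TRP` is undecidable: there is no computable `d : ℕ → Bool` such that whenever
the `e`-th partial computable function (in the standard enumeration by
`Nat.Partrec.Code`) is total and computes, under the fixed encodings, a function
`A : ℤ × ℤ → Option SetTile`, then `d e = true` holds iff the rotation puzzle `A` has a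
solution. -/
theorem inf_trp_undecidable :
    ¬ ∃ d : ℕ → Bool, Computable d ∧
      ∀ (e : ℕ) (A : ℤ × ℤ → Option SetTile),
        (∀ m : ℕ, ((Denumerable.ofNat Nat.Partrec.Code e).eval m).Dom) →
        (∀ x : ℤ × ℤ,
          (Denumerable.ofNat Nat.Partrec.Code e).eval (Encodable.encode x) =
            Part.some (encOptTile (A x))) →
        (d e = true ↔ ∃ sol : ℤ × ℤ → Option Tile, InfSolution A sol) := by
  rintro ⟨d, hd, hspec⟩
  obtain ⟨g, hg, hgA⟩ :=
    exists_computable_codeComputes primrec₂_haltsWithin.encOptTile_stripInstance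
  have hdecides (c : Code) : d (g (encode c)) = true ↔ ¬ (c.eval 0).Dom := by
    rw [hspec _ _ (hgA _).1 (hgA _).2, ofNat_encode,
      exists_infSolution_stripInstance_haltsWithin_iff]
  have hnot_halting : ComputablePred fun c : Code => ¬ (c.eval 0).Dom :=
    ComputablePred.computable_iff.mpr
      ⟨_, hd.comp (hg.comp Computable.encode), funext fun c => propext (hdecides c).symm⟩
  exact ComputablePred.halting_problem 0 (by simpa only [not_not] using hnot_halting.not)
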